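/- arXiv:math/9303208 — 2 statements merged into one kernel-verified Lean document; each statement's English description precedes it below -/
import Mathlib

section
/- Let T be a subtree of ᵂ>2 and u ⊆ ω infinite, and suppose for some j* < ω, for all j₀ < j₁ in u with j* < j₀, T has a splitting node of level in [j₀,j₁). If n₀ < n₁ < n₂ < … is a sequence with |(nᵢ, nᵢ₊₁) ∩ u| > 2^{nᵢ} + 2 for all i, then for every i > j*, |T ∩ ^{n_{i+1}}2| > 2^{nᵢ}. -/
def IsSubtree (T : Set (List Bool)) : Prop :=
  T.Nonempty ∧ (∀ η ∈ T, ∀ ν, ν <+: η → ν ∈ T) ∧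
    ∀ η ∈ T, ∃ ν ∈ T, η <+: ν ∧ η ≠ ν

def IsSplit (T : Set (List Bool)) (η : List Bool) : Prop :=
  η ∈ T ∧ η ++ [false] ∈ T ∧ η ++ [true] ∈ T

/-!
Every node of level `k` of a subtree extends to a node of any level `k' ≥ k`, so truncation maps
level `k'` onto level `k` and the level sizes are monotone; at a splitting node `η` the two
extensions `η ++ [false]`, `η ++ [true]` have the same truncation, so the size grows by at least one
from level `|η|` to level `|η| + 1`. If `j₀ < ⋯ < j_m` are points of `u` beyond `j*`, a splitting
node lies between any two consecutive ones, so the level of `j_m` already has at least `m + 1`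
nodes. Applied to the more than `2 ^ nᵢ` points of `u` in `(nᵢ, nᵢ₊₁)`, this is the bound.
-/

/-- The nodes of `T` of length `k`, written `T ∩ ᵏ2` in the paper. -/
def level (T : Set (List Bool)) (k : ℕ) : Set (List Bool) := {η ∈ T | η.length = k}

lemma level_finite (T : Set (List Bool)) (k : ℕ) : (level T k).Finite :=
  (List.finite_length_eq Bool k).subset fun _ h => h.2

namespace IsSubtree

variable {T : Set (List Bool)} (hT : IsSubtree T)
include hT

lemma take_mem {ν : List Bool} (hν : ν ∈ T) (k : ℕ) : ν.take k ∈ T :=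
  hT.2.1 ν hν _ (List.take_prefix k ν)

lemma nil_mem : [] ∈ T := by
  obtain ⟨η, hη⟩ := hT.1
  simpa using hT.take_mem hη 0

lemma exists_extension_length_ge {η : List Bool} (hη : η ∈ T) (k : ℕ) :
    ∃ ν ∈ T, η <+: ν ∧ k ≤ ν.length := by
  induction k with
  | zero => exact ⟨η, hη, List.prefix_refl η, Nat.zero_le _⟩
  | succ k ih =>
    obtain ⟨ν, hν, hην, hk⟩ := ih
    obtain ⟨ν', hν', hνν', hne⟩ := hT.2.2 ν hν
    have hlt : ν.length < ν'.length :=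
      hνν'.length_le.lt_of_ne fun h => hne (hνν'.eq_of_length h)
    exact ⟨ν', hν', hην.trans hνν', by omega⟩

lemma exists_extension_mem_level {η : List Bool} (hη : η ∈ T) {k : ℕ} (hk : η.length ≤ k) :
    ∃ ν ∈ level T k, ν.take η.length = η := by
  obtain ⟨ν, hν, hην, hkν⟩ := hT.exists_extension_length_ge hη k
  refine ⟨ν.take k, ⟨hT.take_mem hν k, by simp [hkν]⟩, ?_⟩
  rw [List.take_take, min_eq_left hk, ← List.prefix_iff_eq_take.mp hην]

lemma level_subset_image_take {k k' : ℕ} (h : k ≤ k') :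
    level T k ⊆ List.take k '' level T k' := by
  rintro η ⟨hη, rfl⟩
  exact hT.exists_extension_mem_level hη h

lemma ncard_level_mono {k k' : ℕ} (h : k ≤ k') :
    (level T k).ncard ≤ (level T k').ncard :=
  (Set.ncard_le_ncard (hT.level_subset_image_take h) ((level_finite T k').image _)).trans
    (Set.ncard_image_le (level_finite T k'))

lemma one_le_ncard_level (k : ℕ) : 1 ≤ (level T k).ncard := by
  have h0 : (level T 0).ncard = 1 := by
    rw [Set.ncard_eq_one]
    exact ⟨[], Set.eq_singleton_iff_unique_mem.mpr
      ⟨⟨hT.nil_mem, rfl⟩, fun η hη => List.eq_nil_of_length_eq_zero hη.2⟩⟩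
  exact h0 ▸ hT.ncard_level_mono (Nat.zero_le k)

/-- Truncation still maps level `|η| + 1` onto level `|η|` after `η ++ [false]` is removed,
because `η` is also the truncation of `η ++ [true]`. -/
lemma ncard_level_succ_of_isSplit {η : List Bool} (hs : IsSplit T η) :
    (level T η.length).ncard + 1 ≤ (level T (η.length + 1)).ncard := by
  set k := η.length
  have hfalse : η ++ [false] ∈ level T (k + 1) := ⟨hs.2.1, by simp [k]⟩
  have hsub : level T k ⊆ List.take k '' (level T (k + 1) \ {η ++ [false]}) := by
    intro ν hν
    obtain ⟨ν', hν', hνν'⟩ := hT.level_subset_image_take (Nat.le_succ k) hν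
    by_cases heq : ν' = η ++ [false]
    · subst heq
      refine ⟨η ++ [true], ⟨⟨hs.2.2, by simp [k]⟩, by simp⟩, ?_⟩
      simpa [k] using hνν'
    · exact ⟨ν', ⟨hν', heq⟩, hνν'⟩
  have hfin := (level_finite T (k + 1)).sdiff (t := {η ++ [false]})
  calc (level T k).ncard + 1
      ≤ (level T (k + 1) \ {η ++ [false]}).ncard + 1 :=
        Nat.add_le_add_right
          ((Set.ncard_le_ncard hsub (hfin.image _)).trans (Set.ncard_image_le hfin)) 1
    _ = (level T (k + 1)).ncard := Set.ncard_sdiff_singleton_add_one hfalse (level_finite T _)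

lemma card_le_ncard_level (S : Finset ℕ)
    (hsplit : ∀ j₀ ∈ S, ∀ j₁ ∈ S, j₀ < j₁ → ∃ η, IsSplit T η ∧ j₀ ≤ η.length ∧ η.length < j₁)
    {c : ℕ} (hc : ∀ j ∈ S, j ≤ c) : S.card ≤ (level T c).ncard := by
  induction S using Finset.induction_on_max generalizing c with
  | empty => simp
  | insert a s hlt ih =>
    rcases s.eq_empty_or_nonempty with rfl | hs
    · simpa using hT.one_le_ncard_level c
    have hms := s.max'_mem hs
    obtain ⟨η, hη, hmη, hηa⟩ := hsplit _ (Finset.mem_insert_of_mem hms) a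
      (Finset.mem_insert_self a s) (hlt _ hms)
    have hs_card : s.card ≤ (level T η.length).ncard :=
      ih (fun j₀ h₀ j₁ h₁ => hsplit j₀ (Finset.mem_insert_of_mem h₀) j₁ (Finset.mem_insert_of_mem h₁))
        fun j hj => (s.le_max' j hj).trans hmη
    calc (insert a s).card ≤ s.card + 1 := Finset.card_insert_le a s
      _ ≤ (level T η.length).ncard + 1 := by omega
      _ ≤ (level T (η.length + 1)).ncard := hT.ncard_level_succ_of_isSplit hη
      _ ≤ (level T c).ncard := hT.ncard_level_mono ((Nat.succ_le_of_lt hηa).trans (hc a (by simp)))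

end IsSubtree

theorem stmt2_general (T : Set (List Bool)) (hT : IsSubtree T) (u : Set ℕ)
    (jstar : ℕ)
    (hsp : ∀ j₀ j₁ : ℕ, j₀ ∈ u → j₁ ∈ u → jstar < j₀ → j₀ < j₁ →
      ∃ η, IsSplit T η ∧ j₀ ≤ η.length ∧ η.length < j₁)
    (n : ℕ → ℕ) (hn : StrictMono n)
    (hcount : ∀ i, 2 ^ (n i) + 2 < {x ∈ u | n i < x ∧ x < n (i + 1)}.ncard) :
    ∀ i, jstar < i → 2 ^ (n i) < {η ∈ T | η.length = n (i + 1)}.ncard := by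
  intro i hi
  set B := {x ∈ u | n i < x ∧ x < n (i + 1)}
  have hB : B.Finite := (Set.finite_Iio (n (i + 1))).subset fun x hx => hx.2.2
  have hsplit : ∀ j₀ ∈ hB.toFinset, ∀ j₁ ∈ hB.toFinset, j₀ < j₁ →
      ∃ η, IsSplit T η ∧ j₀ ≤ η.length ∧ η.length < j₁ := by
    intro j₀ h₀ j₁ h₁ hlt
    rw [Set.Finite.mem_toFinset] at h₀ h₁
    exact hsp j₀ j₁ h₀.1 h₁.1 (hi.trans_le (hn.le_apply.trans h₀.2.1.le)) hlt
  have hle := hT.card_le_ncard_level hB.toFinset hsplit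
    fun j hj => ((Set.Finite.mem_toFinset hB).mp hj).2.2.le
  rw [← Set.ncard_eq_toFinset_card B hB] at hle
  have hB_card : 2 ^ n i + 2 < B.ncard := hcount i
  change 2 ^ n i < (level T (n (i + 1))).ncard
  omega

/-- If for some `j*`, `T` has a splitting node of level in `[j₀, j₁)` for all
`j₀ < j₁` in `u` with `j* < j₀`, and `⟨nᵢ⟩` is strictly increasing with
`|(nᵢ, nᵢ₊₁) ∩ u| > 2^{nᵢ} + 2`, then for every `i > j*` we have
`|T ∩ ^{n_{i+1}}2| > 2^{nᵢ}`. -/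
theorem stmt2 (T : Set (List Bool)) (hT : IsSubtree T) (u : Set ℕ)
    (hu : u.Infinite) (jstar : ℕ)
    (hsp : ∀ j₀ j₁ : ℕ, j₀ ∈ u → j₁ ∈ u → jstar < j₀ → j₀ < j₁ →
      ∃ η, IsSplit T η ∧ j₀ ≤ η.length ∧ η.length < j₁)
    (n : ℕ → ℕ) (hn : StrictMono n)
    (hcount : ∀ i, 2 ^ (n i) + 2 < {x ∈ u | n i < x ∧ x < n (i + 1)}.ncard) :
    ∀ i, jstar < i → 2 ^ (n i) < {η ∈ T | η.length = n (i + 1)}.ncard :=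
  stmt2_general T hT u jstar hsp n hn hcount
end

section
/- If T ⊆ List Bool is a tree such that for every η ∈ T the set {k ≥ |η| : η⌢0^{k−|η|}⌢⟨1⟩ ∈ T} is finite, then there is a function f : ℕ → ℕ such that every strictly increasing g : ℕ → ℕ whose range's characteristic function r lies in lim T satisfies g(n) ≤ f(n) for all n. -/
lemma seg_eq (χ : ℕ → Bool) (k m : ℕ) (hkm : k ≤ m)
    (h0 : ∀ i, k ≤ i → i < m → χ i = false) (h1 : χ m = true) :
    (List.ofFn fun i : Fin k => χ i) ++ List.replicate (m - k) false ++ [true]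
      = List.ofFn fun i : Fin (m+1) => χ i := by
  apply List.ext_getElem
  · simp; omega
  intro i hi hi'
  simp only [List.length_ofFn] at hi'
  rw [List.getElem_ofFn]
  rcases Nat.lt_or_ge i k with h | h
  · rw [List.getElem_append_left (by simp; omega), List.getElem_append_left (by simpa)]
    simp
  · rcases Nat.lt_or_ge i m with h2 | h2
    · rw [List.getElem_append_left (by simp; omega),
        List.getElem_append_right (by simpa)]
      simp [h0 i h h2]
    · have : i = m := by omega
      subst this
      rw [List.getElem_append_right (by simp; omega)]
      simp [h1]

/-- If `T ⊆ ᵂ>2` is a downward-closed tree such that for every `η ∈ T` the set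
`{k ≥ |η| : η ⌢ 0^{k-|η|} ⌢ ⟨1⟩ ∈ T}` is finite, then there is `f : ℕ → ℕ`
dominating everywhere every strictly increasing `g` whose range's
characteristic function is a branch of `T`. -/
theorem stmt17 (T : Set (List Bool))
    (hdc : ∀ η ∈ T, ∀ ν, ν <+: η → ν ∈ T)
    (hfin : ∀ η ∈ T,
      {k | η.length ≤ k ∧
        η ++ List.replicate (k - η.length) false ++ [true] ∈ T}.Finite) :
    ∃ f : ℕ → ℕ, ∀ g : ℕ → ℕ, StrictMono g →
      ∀ χ : ℕ → Bool, (∀ i, χ i = true ↔ ∃ n, g n = i) →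
      (∀ k, (List.ofFn fun i : Fin k => χ i) ∈ T) →
      ∀ n, g n ≤ f n := by
  classical
  set C : List Bool → Set ℕ := fun η =>
    {k | η.length ≤ k ∧ η ++ List.replicate (k - η.length) false ++ [true] ∈ T}
    with hC
  have hCfin : ∀ η, (C η).Finite := by
    intro η
    by_cases hη : η ∈ T
    · exact hfin η hη
    · have : C η ⊆ ∅ := fun k hk =>
        absurd (hdc _ hk.2 η ⟨List.replicate (k - η.length) false ++ [true], by simp⟩) hη
      exact Set.Finite.subset Set.finite_empty this
  have hUfin : ∀ N : ℕ, (⋃ η ∈ {l : List Bool | l.length ≤ N}, C η).Finite :=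
    fun N => Set.Finite.biUnion (List.finite_length_le Bool N) fun η _ => hCfin η
  set f : ℕ → ℕ := fun n => Nat.rec (sSup (C []))
    (fun _ prev => sSup (⋃ η ∈ {l : List Bool | l.length ≤ prev + 1}, C η)) n
    with hf
  refine ⟨f, ?_⟩
  intro g hg χ hχ hbr
  have hχg : ∀ n, χ (g n) = true := fun n => (hχ _).mpr ⟨n, rfl⟩
  have hfalse : ∀ i, (∀ j, g j ≠ i) → χ i = false := by
    intro i h
    rcases Bool.eq_false_or_eq_true (χ i) with h' | h'
    · rcases (hχ i).mp h' with ⟨j, hj⟩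
      exact absurd hj (h j)
    · exact h'
  have h0 : g 0 ∈ C [] := by
    refine ⟨Nat.zero_le _, ?_⟩
    have heq := seg_eq χ 0 (g 0) (Nat.zero_le _)
      (fun i _ hi => hfalse i fun j hj => absurd (hj ▸ hg.monotone (Nat.zero_le j))
        (by omega)) (hχg 0)
    simp only [List.ofFn_zero] at heq
    have : ([] : List Bool) ++ List.replicate (g 0 - 0) false ++ [true]
        = List.ofFn fun i : Fin (g 0 + 1) => χ i := by simpa using heq
    simp only [List.length_nil]
    rw [this]; exact hbr _
  have hstep : ∀ n, g (n+1) ∈ C (List.ofFn fun i : Fin (g n + 1) => χ i) := by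
    intro n
    have hlt : g n < g (n+1) := hg (Nat.lt_succ_self n)
    refine ⟨by simp; omega, ?_⟩
    have heq := seg_eq χ (g n + 1) (g (n+1)) (by omega)
      (fun i hi hi' => hfalse i fun j hj => by
        rcases Nat.lt_or_ge j (n+1) with hjn | hjn
        · have := hg.monotone (Nat.lt_succ_iff.mp hjn); omega
        · have := hg.monotone hjn; omega) (hχg (n+1))
    simp only [List.length_ofFn]
    rw [heq]; exact hbr _
  intro n
  induction n with
  | zero => exact le_csSup (hCfin []).bddAbove h0
  | succ n ih =>
    have hmem : g (n+1) ∈ ⋃ η ∈ {l : List Bool | l.length ≤ f n + 1}, C η := by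
      refine Set.mem_biUnion (show (List.ofFn fun i : Fin (g n + 1) => χ i)
        ∈ {l : List Bool | l.length ≤ f n + 1} from by simp; omega) (hstep n)
    exact le_csSup (hUfin (f n + 1)).bddAbove hmem
end
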